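/- Let T be an infinite rooted tree. The function g defined by g(o) = 0 and g(v) = ℓ_m(|v|) for v ≠ o belongs to L^(m) for every m ≥ 0; specifically ‖g‖_0 = 1, and for m ≥ 1 one has ‖g‖_m ≤ 2·∏_{j=1}^{m} ℓ_j(2). -/

import Mathlib

open Real Filter

/-- Iterated logarithm: ℓ₀(x) = x, ℓ_{j+1}(x) = 1 + log ℓ_j(x). -/
noncomputable def ell : ℕ → ℝ → ℝ
  | 0, x => x
  | j + 1, x => 1 + Real.log (ell j x)

/-- Λ_k(x) = ∏_{j=0}^{k-1} ℓ_j(x). -/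
noncomputable def Lam (k : ℕ) (x : ℝ) : ℝ := ∏ j ∈ Finset.range k, ell j x

/-- Discrete derivative of f on a rooted tree given by a parent map:
`f v - f (parent v)` (automatically 0 at the root since `parent o = o`). -/
def Der {V : Type*} (parent : V → V) (f : V → ℂ) (v : V) : ℂ := f v - f (parent v)

/-- The set of values |f'(v)|·Λ_k(|v|) over v ≠ o; f ∈ L^(k) iff this set is bounded above. -/
def lipSet {V : Type*} [DecidableEq V] (o : V) (parent : V → V) (depth : V → ℕ) (k : ℕ) (f : V → ℂ) : Set ℝ :=
  {r | ∃ v, v ≠ o ∧ r = ‖Der parent f v‖ * Lam k (depth v)}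

/-- ‖f‖_k = |f(o)| + sup_{v ≠ o} |f'(v)|·Λ_k(|v|). -/
noncomputable def lipNorm {V : Type*} [DecidableEq V] (o : V) (parent : V → V) (depth : V → ℕ) (k : ℕ)
    (f : V → ℂ) : ℝ :=
  ‖f o‖ + sSup (lipSet o parent depth k f)

/-!
Since `ℓ_m' = 1 / Λ_m` on `(1, ∞)`, the mean value theorem gives
`(ℓ_m(t) - ℓ_m(t - 1)) Λ_m(t - 1) ≤ 1`, and the submultiplicativity
`ℓ_j(ab) ≤ ℓ_j(a) ℓ_j(b)` gives `Λ_m(t) ≤ Λ_m(2) Λ_m(t - 1)` for `t ≥ 2`.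
Hence every increment of `g` weighted by `Λ_m(|v|)` is at most `Λ_m(2) ≤ Λ_{m+1}(2)`.
For `m = 0` every increment equals `1`.
-/

lemma one_le_ell : ∀ (j : ℕ) {x : ℝ}, 1 ≤ x → 1 ≤ ell j x
  | 0, _, hx => hx
  | j + 1, _, hx => by
    simpa [ell] using Real.log_nonneg (one_le_ell j hx)

lemma ell_one : ∀ j : ℕ, ell j 1 = 1
  | 0 => rfl
  | j + 1 => by simp [ell, ell_one j]

lemma ell_mono : ∀ (j : ℕ) {a b : ℝ}, 1 ≤ a → a ≤ b → ell j a ≤ ell j b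
  | 0, _, _, _, hab => hab
  | j + 1, _, _, ha, hab => by
    simpa [ell] using Real.log_le_log (by linarith [one_le_ell j ha]) (ell_mono j ha hab)

lemma ell_mul_le : ∀ (j : ℕ) {a b : ℝ}, 1 ≤ a → 1 ≤ b → ell j (a * b) ≤ ell j a * ell j b
  | 0, _, _, _, _ => le_rfl
  | j + 1, a, b, ha, hb => by
    have ha' := one_le_ell j ha
    have hb' := one_le_ell j hb
    have hlog : Real.log (ell j (a * b)) ≤ Real.log (ell j a) + Real.log (ell j b) := by
      rw [← Real.log_mul (by positivity) (by positivity)]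
      exact Real.log_le_log (by linarith [one_le_ell j (one_le_mul_of_one_le_of_one_le ha hb)])
        (ell_mul_le j ha hb)
    have hpa := Real.log_nonneg ha'
    have hpb := Real.log_nonneg hb'
    simp only [ell]
    nlinarith

lemma continuousOn_ell : ∀ j : ℕ, ContinuousOn (ell j) (Set.Ici 1)
  | 0 => continuousOn_id
  | j + 1 => continuousOn_const.add <|
    (continuousOn_ell j).log fun _ hx => (zero_lt_one.trans_le (one_le_ell j hx)).ne'

lemma Lam_succ (k : ℕ) (x : ℝ) : Lam (k + 1) x = Lam k x * ell k x :=
  Finset.prod_range_succ _ _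

lemma Lam_succ_eq_mul_prod_Icc (k : ℕ) (x : ℝ) :
    Lam (k + 1) x = x * ∏ j ∈ Finset.Icc 1 k, ell j x := by
  rw [Lam, Finset.prod_range_succ', mul_comm, ← Finset.Ico_add_one_right_eq_Icc, Finset.prod_Ico_eq_prod_range]
  simp [ell, add_comm]

lemma Lam_one (k : ℕ) : Lam k 1 = 1 := by
  simp [Lam, ell_one]

lemma one_le_Lam (k : ℕ) {x : ℝ} (hx : 1 ≤ x) : 1 ≤ Lam k x :=
  Finset.one_le_prod fun j _ => one_le_ell j hx

lemma Lam_mono (k : ℕ) {a b : ℝ} (ha : 1 ≤ a) (hab : a ≤ b) : Lam k a ≤ Lam k b :=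
  Finset.prod_le_prod (fun j _ => zero_le_one.trans (one_le_ell j ha))
    fun j _ => ell_mono j ha hab

lemma Lam_le_Lam_succ (k : ℕ) {x : ℝ} (hx : 1 ≤ x) : Lam k x ≤ Lam (k + 1) x := by
  rw [Lam_succ]
  exact le_mul_of_one_le_right (zero_le_one.trans (one_le_Lam k hx)) (one_le_ell k hx)

lemma Lam_mul_le (k : ℕ) {a b : ℝ} (ha : 1 ≤ a) (hb : 1 ≤ b) :
    Lam k (a * b) ≤ Lam k a * Lam k b := by
  rw [Lam, Lam, Lam, ← Finset.prod_mul_distrib]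
  exact Finset.prod_le_prod
    (fun j _ => zero_le_one.trans (one_le_ell j (one_le_mul_of_one_le_of_one_le ha hb)))
    fun j _ => ell_mul_le j ha hb

lemma Lam_le_Lam_two_mul (k : ℕ) {x : ℝ} (hx : 2 ≤ x) :
    Lam k x ≤ Lam k 2 * Lam k (x - 1) :=
  (Lam_mono k (by linarith) (by linarith)).trans (Lam_mul_le k one_le_two (by linarith))

lemma hasDerivAt_ell : ∀ (j : ℕ) {x : ℝ}, 1 < x → HasDerivAt (ell j) (Lam j x)⁻¹ x
  | 0, x, _ => by
    show HasDerivAt (fun y : ℝ => y) _ x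
    simpa [Lam] using hasDerivAt_id' x
  | j + 1, x, hx => by
    have hell := one_le_ell j hx.le
    have h := ((Real.hasDerivAt_log (by positivity)).comp x (hasDerivAt_ell j hx)).const_add 1
    refine h.congr_deriv ?_
    rw [Lam_succ, mul_inv, mul_comm]

lemma ell_sub_mul_Lam_le (k : ℕ) {x y : ℝ} (hx : 1 ≤ x) (hxy : x ≤ y) :
    (ell k y - ell k x) * Lam k x ≤ y - x := by
  rcases hxy.eq_or_lt with rfl | hlt
  · simp
  obtain ⟨c, hc, hslope⟩ := exists_hasDerivAt_eq_slope (ell k) (fun z => (Lam k z)⁻¹) hlt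
    ((continuousOn_ell k).mono fun z hz => hx.trans hz.1)
    fun z hz => hasDerivAt_ell k (hx.trans_lt hz.1)
  have hLx := one_le_Lam k hx
  have hLc : Lam k x ≤ Lam k c := Lam_mono k hx hc.1.le
  rw [eq_div_iff (sub_pos.2 hlt).ne'] at hslope
  rw [← hslope, mul_comm, ← mul_assoc]
  exact mul_le_of_le_one_left (sub_pos.2 hlt).le (mul_inv_le_one_of_le₀ hLc (by linarith))

lemma ell_sub_mul_Lam_le_Lam_two (k : ℕ) {x : ℝ} (hx : 2 ≤ x) :
    (ell k x - ell k (x - 1)) * Lam k x ≤ Lam k 2 := by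
  have hinc : 0 ≤ ell k x - ell k (x - 1) := sub_nonneg.2 (ell_mono k (by linarith) (by linarith))
  have hmvt := ell_sub_mul_Lam_le k (x := x - 1) (y := x) (by linarith) (by linarith)
  calc (ell k x - ell k (x - 1)) * Lam k x
      ≤ (ell k x - ell k (x - 1)) * (Lam k 2 * Lam k (x - 1)) :=
        mul_le_mul_of_nonneg_left (Lam_le_Lam_two_mul k hx) hinc
    _ = Lam k 2 * ((ell k x - ell k (x - 1)) * Lam k (x - 1)) := by ring
    _ ≤ Lam k 2 * 1 :=
        mul_le_mul_of_nonneg_left (by linarith) (zero_le_one.trans (one_le_Lam k one_le_two))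
    _ = Lam k 2 := mul_one _

section Tree

variable {V : Type*} [DecidableEq V] (o : V) (parent : V → V) (depth : V → ℕ)

noncomputable abbrev ellTestFun (k : ℕ) (v : V) : ℂ := if v = o then 0 else (ell k (depth v) : ℂ)

variable {o parent depth}

lemma norm_Der_ellTestFun_mul_Lam_le (hdepth0 : depth o = 0)
    (hdepth : ∀ v, v ≠ o → depth v = depth (parent v) + 1) (k : ℕ) {v : V} (hv : v ≠ o) :
    ‖Der parent (ellTestFun o depth k) v‖ * Lam k (depth v) ≤ Lam k 2 := by
  simp only [Der, ellTestFun, if_neg hv, hdepth v hv]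
  by_cases hp : parent v = o
  · simp only [hp, hdepth0, if_pos]
    norm_num [ell_one, Lam_one]
    exact one_le_Lam k one_le_two
  · have ht : 1 ≤ (depth (parent v) : ℝ) := by
      rw [hdepth _ hp]
      exact_mod_cast Nat.le_add_left 1 _
    have hinc : 0 ≤ ell k (depth (parent v) + 1) - ell k (depth (parent v)) :=
      sub_nonneg.2 (ell_mono k ht (by linarith))
    rw [if_neg hp, Nat.cast_succ, ← Complex.ofReal_sub, Complex.norm_real, Real.norm_of_nonneg hinc]
    simpa using ell_sub_mul_Lam_le_Lam_two k (x := depth (parent v) + 1) (by linarith)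

lemma norm_Der_ellTestFun_zero (hdepth0 : depth o = 0)
    (hdepth : ∀ v, v ≠ o → depth v = depth (parent v) + 1) {v : V} (hv : v ≠ o) :
    ‖Der parent (ellTestFun o depth 0) v‖ = 1 := by
  simp only [Der, ellTestFun, if_neg hv, hdepth v hv, ell]
  by_cases hp : parent v = o
  · simp [hp, hdepth0]
  · simp [hp]

lemma lipSet_ellTestFun_subset (hdepth0 : depth o = 0)
    (hdepth : ∀ v, v ≠ o → depth v = depth (parent v) + 1) (k : ℕ) :
    lipSet o parent depth k (ellTestFun o depth k) ⊆ Set.Iic (Lam k 2) := by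
  rintro _ ⟨v, hv, rfl⟩
  exact norm_Der_ellTestFun_mul_Lam_le hdepth0 hdepth k hv

lemma lipSet_ellTestFun_zero (hdepth0 : depth o = 0)
    (hdepth : ∀ v, v ≠ o → depth v = depth (parent v) + 1) (hne : ∃ v, v ≠ o) :
    lipSet o parent depth 0 (ellTestFun o depth 0) = {1} := by
  ext r
  simp only [lipSet, Lam, Finset.range_zero, Finset.prod_empty, mul_one, Set.mem_ofPred_eq,
    Set.mem_singleton_iff]
  constructor
  · rintro ⟨v, hv, rfl⟩
    exact norm_Der_ellTestFun_zero hdepth0 hdepth hv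
  · rintro rfl
    obtain ⟨v, hv⟩ := hne
    exact ⟨v, hv, (norm_Der_ellTestFun_zero hdepth0 hdepth hv).symm⟩

end Tree

theorem ell_test_function_general {V : Type*} [DecidableEq V] (o : V) (parent : V → V) (depth : V → ℕ)
    (hdepth0 : depth o = 0)
    (hdepth : ∀ v, v ≠ o → depth v = depth (parent v) + 1)
    (hchild : ∀ v, ∃ w, w ≠ o ∧ parent w = v)
    (m : ℕ) :
    BddAbove (lipSet o parent depth m
      (fun v => if v = o then 0 else ell m (depth v))) ∧
    lipNorm o parent depth 0 (fun v => if v = o then 0 else ell 0 (depth v)) = 1 ∧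
    (1 ≤ m → lipNorm o parent depth m (fun v => if v = o then 0 else ell m (depth v)) ≤
      2 * ∏ j ∈ Finset.Icc 1 m, ell j 2) := by
  have hsub := lipSet_ellTestFun_subset hdepth0 hdepth m
  refine ⟨⟨_, hsub⟩, ?_, fun _ => ?_⟩
  · obtain ⟨w, hw, -⟩ := hchild o
    rw [lipNorm, lipSet_ellTestFun_zero hdepth0 hdepth ⟨w, hw⟩, csSup_singleton]
    simp
  · rw [lipNorm, ← Lam_succ_eq_mul_prod_Icc]
    simp only [if_pos, norm_zero, zero_add]
    exact Real.sSup_le (fun r hr => (hsub hr).trans (Lam_le_Lam_succ m one_le_two))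
      (zero_le_one.trans (one_le_Lam _ one_le_two))

/-- The function g(o) = 0, g(v) = ℓ_m(|v|) for v ≠ o belongs to L^(m) for every m,
with ‖g‖₀ = 1 and, for m ≥ 1, ‖g‖_m ≤ 2·∏_{j=1}^m ℓ_j(2). -/
theorem ell_test_function {V : Type*} [DecidableEq V] (o : V) (parent : V → V) (depth : V → ℕ)
    (hpar : parent o = o) (hdepth0 : depth o = 0)
    (hdepth : ∀ v, v ≠ o → depth v = depth (parent v) + 1)
    (hchild : ∀ v, ∃ w, w ≠ o ∧ parent w = v)
    (m : ℕ) :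
    BddAbove (lipSet o parent depth m
      (fun v => if v = o then 0 else ell m (depth v))) ∧
    lipNorm o parent depth 0 (fun v => if v = o then 0 else ell 0 (depth v)) = 1 ∧
    (1 ≤ m → lipNorm o parent depth m (fun v => if v = o then 0 else ell m (depth v)) ≤
      2 * ∏ j ∈ Finset.Icc 1 m, ell j 2) :=
  ell_test_function_general o parent depth hdepth0 hdepth hchild m
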